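/- arXiv:2603.25151 — 2 statements merged into one kernel-verified Lean document; each statement's English description precedes it below -/
import Mathlib

section
/- Let μ be a Borel probability measure on ℝ with no atoms (μ({x}) = 0 for every x ∈ ℝ). Then for all u, v ∈ Ĥ, ∫_ℝ |⟨Ŝ_x u, v⟩|² dμ(x) = 0. In particular, the average over μ of the pure state ρ_{Ŝ_x u} annihilates the projector onto every vector v ∈ Ĥ, so the averaged shift channel maps every vector pure state to a singular quantum state. -/
open MeasureTheory Complex Filter
open scoped ComplexConjugate ENNReal Classical

noncomputable section

/-- `Ĥ = L²(ℝ, ν; ℂ)`: the Hilbert space of complex-valued functions on `ℝ` that are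
square-summable with respect to the counting measure, realized as `lp (fun _ : ℝ => ℂ) 2`
(functions with countable support and square-summable values), with inner product
`⟪u, v⟫ = ∑' x, conj (u x) * v x`, conjugate-linear in the first argument. -/
abbrev Hhat : Type := lp (fun _ : ℝ => ℂ) 2

lemma memℓp_shift (h : ℝ) (u : Hhat) : Memℓp (fun x : ℝ => u (x + h)) 2 := by
  refine memℓp_gen ?_
  have hs : Summable fun x : ℝ => ‖u x‖ ^ (2 : ℝ≥0∞).toReal :=
    (lp.memℓp u).summable (by norm_num)
  exact ((Equiv.addRight h).summable_iff
    (f := fun x : ℝ => ‖u x‖ ^ (2 : ℝ≥0∞).toReal)).mpr hs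

/-- The shift operator `Ŝ_h` on `Ĥ`, `(Ŝ_h u) x = u (x + h)`. -/
def Shat (h : ℝ) (u : Hhat) : Hhat := ⟨fun x : ℝ => u (x + h), memℓp_shift h u⟩

lemma memℓp_mul_of_le {g : ℝ → ℂ} {C : ℝ} (hg : ∀ x, ‖g x‖ ≤ C) (u : Hhat) :
    Memℓp (fun x : ℝ => g x * u x) 2 := by
  refine memℓp_gen ?_
  have hs : Summable fun x : ℝ => ‖u x‖ ^ (2 : ℝ≥0∞).toReal :=
    (lp.memℓp u).summable (by norm_num)
  have h2 : (2 : ℝ≥0∞).toReal = (2 : ℝ) := by norm_num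
  rw [h2] at hs ⊢
  refine Summable.of_nonneg_of_le (fun x => by positivity) (fun x => ?_) (hs.mul_left (C ^ 2))
  calc ‖g x * u x‖ ^ (2 : ℝ) = ‖g x‖ ^ (2 : ℝ) * ‖u x‖ ^ (2 : ℝ) := by
        rw [norm_mul, Real.mul_rpow (norm_nonneg _) (norm_nonneg _)]
    _ ≤ C ^ (2 : ℝ) * ‖u x‖ ^ (2 : ℝ) := by gcongr; exact hg x
    _ = C ^ 2 * ‖u x‖ ^ (2 : ℝ) := by rw [Real.rpow_two]

/-- The modulation operator `M̂_a` on `Ĥ`, `(M̂_a u) x = e^{iax} u x`. -/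
def Mhat (a : ℝ) (u : Hhat) : Hhat :=
  ⟨fun x : ℝ => Complex.exp ((a * x : ℝ) * Complex.I) * u x,
    memℓp_mul_of_le (C := 1) (fun x => le_of_eq (Complex.norm_exp_ofReal_mul_I _)) u⟩

/-- Multiplication `M_f u` of an element of `Ĥ` by a function `f : ℝ → ℂ`
(with junk value `0` in case the product fails to be square-summable; for bounded `f`
the `dite` always takes the first branch). -/
def mulElem (f : ℝ → ℂ) (u : Hhat) : Hhat :=
  if h : Memℓp (fun x : ℝ => f x * u x) 2 then ⟨_, h⟩ else 0

/-! Vectors of `Ĥ` have countable support, so `⟨Ŝ_x u, v⟩` can be nonzero only for `x` in the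
countable set `supp u - supp v`; an atomless measure gives that set measure zero. -/

open scoped Pointwise

theorem Memℓp.countable_support {ι E : Type*} [NormedAddCommGroup E] {p : ℝ≥0∞} {f : ι → E}
    (hf : Memℓp f p) (hp : 0 < p.toReal) : f.support.Countable := by
  refine (hf.summable hp).countable_support.mono fun i hi => ?_
  simp only [Function.mem_support] at hi ⊢
  exact (Real.rpow_pos_of_pos (norm_pos_iff.mpr hi) _).ne'

theorem lp.inner_eq_zero_of_disjoint_support {ι 𝕜 : Type*} {G : ι → Type*} [RCLike 𝕜]
    [∀ i, NormedAddCommGroup (G i)] [∀ i, InnerProductSpace 𝕜 (G i)] {f g : lp G 2}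
    (h : ∀ i, f i = 0 ∨ g i = 0) : (inner 𝕜 f g : 𝕜) = 0 := by
  rw [lp.inner_eq_tsum]
  refine (tsum_congr fun i => ?_).trans tsum_zero
  rcases h i with hf | hg
  · simp [hf]
  · simp [hg]

theorem Hhat.countable_support (u : Hhat) : (Function.support (⇑u : ℝ → ℂ)).Countable :=
  (lp.memℓp u).countable_support (by norm_num)

theorem inner_shat_eq_zero_of_notMem_sub {u v : Hhat} {x : ℝ}
    (hx : x ∉ Function.support (⇑u : ℝ → ℂ) - Function.support (⇑v : ℝ → ℂ)) :
    (inner ℂ (Shat x u) v : ℂ) = 0 := by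
  refine lp.inner_eq_zero_of_disjoint_support fun y => ?_
  by_contra! hne
  exact hx ⟨y + x, hne.1, y, hne.2, add_sub_cancel_left y x⟩

theorem averaged_shift_channel_produces_singular_states_general
    (μ : Measure ℝ) (hμ : ∀ x : ℝ, μ {x} = 0) (u v : Hhat) :
    ∫ x, ‖(inner ℂ (Shat x u) v : ℂ)‖ ^ 2 ∂μ = 0 := by
  have : NullSingletonClass μ := ⟨hμ⟩
  have hdiff : μ (Function.support (⇑u : ℝ → ℂ) - Function.support (⇑v : ℝ → ℂ)) = 0 :=
    ((Hhat.countable_support u).image2 (Hhat.countable_support v) _).measure_zero μ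
  refine integral_eq_zero_of_ae ?_
  filter_upwards [measure_eq_zero_iff_ae_notMem.mp hdiff] with x hx
  simp [inner_shat_eq_zero_of_notMem_sub hx]

/-- let `μ` be an atomless Borel probability measure on `ℝ`. Then for all
`u, v ∈ Ĥ`, `∫ |⟨Ŝ_x u, v⟩|² dμ(x) = 0`: the average over `μ` of the pure state `ρ_{Ŝ_x u}`
annihilates the projector onto every vector `v ∈ Ĥ`, so the averaged shift channel maps every
vector pure state to a singular quantum state. -/
theorem averaged_shift_channel_produces_singular_states
    (μ : Measure ℝ) [IsProbabilityMeasure μ] (hμ : ∀ x : ℝ, μ {x} = 0) (u v : Hhat) :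
    ∫ x, ‖(inner ℂ (Shat x u) v : ℂ)‖ ^ 2 ∂μ = 0 :=
  averaged_shift_channel_produces_singular_states_general μ hμ u v

end
end

section
/- Let μ be a Borel probability measure on ℝ with characteristic function χ_μ, and let u ∈ Ĥ have countable support {p_j}_{j∈ℕ} with coefficients c_j = u(p_j). Then for all v, w ∈ Ĥ, the function x ↦ ⟨v, M̂_x u⟩·⟨M̂_x u, w⟩ is μ-integrable and ∫_ℝ ⟨v, M̂_x u⟩ ⟨M̂_x u, w⟩ dμ(x) = Σ_{j,k} c_j conj(c_k) χ_μ(p_j − p_k) conj(v(p_j)) w(p_k), where the double series converges absolutely. In particular, the average over μ of the pure states ρ_{M̂_x u} is given by the density kernel (p_j, p_k) ↦ c_j conj(c_k) χ_μ(p_j − p_k), so the averaged modulation channel E Φ_ξ maps the pure state ρ_u to a normal state. -/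
/-!
Expanding both inner products over the support `{p_j}` of `u` writes the integrand as the double
series `∑_{j,k} conj (v p_j) w p_k c_j conj c_k e^{i x (p_j - p_k)}`. Its terms are bounded,
uniformly in `x`, by `|v p_j| |c_j| |c_k| |w p_k|`, which is summable by Cauchy–Schwarz in `ℓ²`.
Hence the integral may be taken term by term, and integrating `e^{i x (p_j - p_k)}` against `μ`
gives `χ_μ (p_j - p_k)`.
-/

open MeasureTheory Complex Filter
open scoped ComplexConjugate ENNReal Classical

noncomputable section

open scoped InnerProductSpace

section TsumIntegral

variable {ι α E : Type*} [Countable ι] [MeasurableSpace α] {μ : Measure α} [IsFiniteMeasure μ]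
  [NormedAddCommGroup E] {F : ι → α → E} {C : ι → ℝ}

theorem integrable_tsum_of_norm_le [CompleteSpace E] (hF : ∀ i, AEStronglyMeasurable (F i) μ)
    (hC : Summable C) (hFC : ∀ i x, ‖F i x‖ ≤ C i) : Integrable (fun x => ∑' i, F i x) μ := by
  have hsum : ∀ x, HasSum (fun i => F i x) (∑' i, F i x) :=
    fun x => (hC.of_norm_bounded (hFC · x)).hasSum
  have hmeas : AEStronglyMeasurable (fun x => ∑' i, F i x) μ :=
    aestronglyMeasurable_of_tendsto_ae atTop
      (fun s => Finset.aestronglyMeasurable_fun_sum s fun i _ => hF i) (ae_of_all _ hsum)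
  exact (integrable_const (∑' i, C i)).mono' hmeas
    (ae_of_all _ fun x => tsum_of_norm_bounded hC.hasSum (hFC · x))

theorem integral_tsum_of_norm_le [NormedSpace ℝ E] (hF : ∀ i, AEStronglyMeasurable (F i) μ)
    (hC : Summable C) (hFC : ∀ i x, ‖F i x‖ ≤ C i) :
    ∫ x, ∑' i, F i x ∂μ = ∑' i, ∫ x, F i x ∂μ := by
  have hFint : ∀ i, Integrable (F i) μ :=
    fun i => (integrable_const (C i)).mono' (hF i) (ae_of_all _ (hFC i))
  refine (integral_tsum_of_summable_integral_norm hFint ?_).symm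
  refine (hC.mul_right (μ.real Set.univ)).of_norm_bounded fun i => ?_
  exact norm_integral_le_of_norm_le_const (ae_of_all _ fun x => by simpa using hFC i x)

end TsumIntegral

namespace lp

variable {α ι 𝕜 E : Type*} [RCLike 𝕜] [NormedAddCommGroup E] [InnerProductSpace 𝕜 E]
  {p : ι → α}

theorem summable_norm_mul_comp (hp : Function.Injective p) (f g : lp (fun _ : α => E) 2) :
    Summable fun j => ‖f (p j)‖ * ‖g (p j)‖ :=
  (lp.summable_mul (by norm_num [Real.HolderConjugate.two_two]) f g).comp_injective hp

theorem inner_eq_tsum_comp (hp : Function.Injective p) (f g : lp (fun _ : α => E) 2)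
    (hfg : ∀ a, f a ≠ 0 → g a ≠ 0 → a ∈ Set.range p) :
    ⟪f, g⟫_𝕜 = ∑' j, ⟪f (p j), g (p j)⟫_𝕜 := by
  refine (hp.tsum_eq (f := fun a => ⟪f a, g a⟫_𝕜) fun a ha => ?_).symm
  exact hfg a (fun h => ha (by simp [h])) (fun h => ha (by simp [h]))

theorem inner_mul_inner_eq_tsum (hp : Function.Injective p) (v u w : lp (fun _ : α => ℂ) 2)
    (hu : ∀ a, u a ≠ 0 → a ∈ Set.range p) :
    ⟪v, u⟫_ℂ * ⟪u, w⟫_ℂ =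
      ∑' jk : ι × ι, conj (v (p jk.1)) * w (p jk.2) * (u (p jk.1) * conj (u (p jk.2))) := by
  rw [inner_eq_tsum_comp hp v u fun a _ h => hu a h, inner_eq_tsum_comp hp u w fun a h _ => hu a h,
    tsum_mul_tsum_of_summable_norm (by simpa [mul_comm] using summable_norm_mul_comp hp v u)
      (by simpa [mul_comm] using summable_norm_mul_comp hp u w)]
  refine tsum_congr fun jk => ?_
  simp only [RCLike.inner_apply]
  ring

end lp

theorem charFun_real_eq_integral (μ : Measure ℝ) (t : ℝ) :
    charFun μ t = ∫ y, cexp ((t * y : ℝ) * I) ∂μ := by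
  simp [charFun_apply_real]

section Modulation

variable (u : Hhat)

theorem Mhat_apply (x t : ℝ) : Mhat x u t = cexp ((x * t : ℝ) * I) * u t := rfl

theorem norm_Mhat_apply (x t : ℝ) : ‖Mhat x u t‖ = ‖u t‖ := by
  rw [Mhat_apply, norm_mul, norm_exp_ofReal_mul_I, one_mul]

theorem Mhat_apply_eq_zero_iff (x t : ℝ) : Mhat x u t = 0 ↔ u t = 0 := by
  simp [Mhat_apply, exp_ne_zero]

@[fun_prop]
theorem continuous_Mhat_apply (t : ℝ) : Continuous fun x => Mhat x u t := by
  simp only [Mhat_apply]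
  fun_prop

theorem Mhat_apply_mul_conj (x a b : ℝ) :
    Mhat x u a * conj (Mhat x u b) = cexp (((a - b) * x : ℝ) * I) * (u a * conj (u b)) := by
  have hexp : cexp ((x * a : ℝ) * I) * conj (cexp ((x * b : ℝ) * I))
      = cexp (((a - b) * x : ℝ) * I) := by
    rw [← exp_conj, ← exp_add, map_mul, conj_ofReal, conj_I]
    push_cast
    ring_nf
  rw [Mhat_apply, Mhat_apply, ← hexp, map_mul]
  ring

theorem integral_Mhat_apply_mul_conj (μ : Measure ℝ) (a b : ℝ) :
    ∫ x, Mhat x u a * conj (Mhat x u b) ∂μ = charFun μ (a - b) * (u a * conj (u b)) := by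
  simp only [Mhat_apply_mul_conj, integral_mul_const, charFun_real_eq_integral]

end Modulation

/-- let `μ` be a Borel probability measure on `ℝ` with characteristic function
`χ_μ`, and let `u ∈ Ĥ` have countable support `{p_j}` with coefficients `c_j = u (p_j)`. Then
for all `v, w ∈ Ĥ`, the function `x ↦ ⟨v, M̂_x u⟩·⟨M̂_x u, w⟩` is `μ`-integrable, and
`∫ ⟨v, M̂_x u⟩⟨M̂_x u, w⟩ dμ(x) = Σ_{j,k} c_j conj(c_k) χ_μ(p_j − p_k) conj(v(p_j)) w(p_k)`,
the double series converging absolutely: the averaged modulation channel maps the pure state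
`ρ_u` to a normal state with density kernel `(p_j, p_k) ↦ c_j conj(c_k) χ_μ(p_j − p_k)`. -/
theorem averaged_modulation_channel_preserves_normality
    (μ : Measure ℝ) [IsProbabilityMeasure μ]
    (u : Hhat) (p : ℕ → ℝ) (hp : Function.Injective p) (c : ℕ → ℂ)
    (hc : ∀ j, u (p j) = c j) (hsupp : ∀ x : ℝ, u x ≠ 0 → x ∈ Set.range p)
    (v w : Hhat) :
    Integrable (fun x : ℝ => (inner ℂ v (Mhat x u) : ℂ) * (inner ℂ (Mhat x u) w : ℂ)) μ ∧
    Summable (fun jk : ℕ × ℕ =>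
      ‖c jk.1 * conj (c jk.2) *
          (∫ y, Complex.exp (((p jk.1 - p jk.2) * y : ℝ) * Complex.I) ∂μ) *
          conj (v (p jk.1)) * w (p jk.2)‖) ∧
    ∫ x, (inner ℂ v (Mhat x u) : ℂ) * (inner ℂ (Mhat x u) w : ℂ) ∂μ
      = ∑' jk : ℕ × ℕ,
          c jk.1 * conj (c jk.2) *
            (∫ y, Complex.exp (((p jk.1 - p jk.2) * y : ℝ) * Complex.I) ∂μ) *
            conj (v (p jk.1)) * w (p jk.2) := by
  obtain rfl : c = fun j => u (p j) := funext fun j => (hc j).symm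
  simp only [← charFun_real_eq_integral]
  set F : ℕ × ℕ → ℝ → ℂ := fun jk x =>
    conj (v (p jk.1)) * w (p jk.2) * (Mhat x u (p jk.1) * conj (Mhat x u (p jk.2)))
  have hexpand : ∀ x, ⟪v, Mhat x u⟫_ℂ * ⟪Mhat x u, w⟫_ℂ = ∑' jk, F jk x := fun x =>
    lp.inner_mul_inner_eq_tsum hp _ _ _ fun t ht => hsupp t ((Mhat_apply_eq_zero_iff u x t).not.mp ht)
  have hC := (lp.summable_norm_mul_comp hp v u).mul_of_nonneg
    (lp.summable_norm_mul_comp hp u w) (fun _ => by positivity) (fun _ => by positivity)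
  have hFC : ∀ jk x, ‖F jk x‖ ≤ ‖v (p jk.1)‖ * ‖u (p jk.1)‖ * (‖u (p jk.2)‖ * ‖w (p jk.2)‖) :=
    fun jk x => by
      simp only [F, norm_mul, RCLike.norm_conj, norm_Mhat_apply]
      linarith
  have hFmeas : ∀ jk, AEStronglyMeasurable (F jk) μ := fun jk =>
    (by fun_prop : Continuous (F jk)).aestronglyMeasurable
  simp only [hexpand]
  refine ⟨integrable_tsum_of_norm_le hFmeas hC hFC, hC.of_nonneg_of_le (fun _ => norm_nonneg _)
    fun jk => ?_, ?_⟩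
  · have hχ := norm_charFun_le_one (μ := μ) (p jk.1 - p jk.2)
    have hC_nonneg : 0 ≤ ‖v (p jk.1)‖ * ‖u (p jk.1)‖ * (‖u (p jk.2)‖ * ‖w (p jk.2)‖) := by
      positivity
    simp only [norm_mul, RCLike.norm_conj]
    linarith [mul_le_mul_of_nonneg_left hχ hC_nonneg]
  · rw [integral_tsum_of_norm_le hFmeas hC hFC]
    refine tsum_congr fun jk => ?_
    simp only [F, integral_const_mul, integral_Mhat_apply_mul_conj]
    ring
end
end
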